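/- arXiv:2509.00464 — 4 statements merged into one kernel-verified Lean document; each statement's English description precedes it below -/
import Mathlib

section
/- For τ ∈ (0,1) and real numbers u, v, the Knight identity holds: ρ_τ(u − v) − ρ_τ(u) = −v·(τ − 1_{u ≤ 0}) + ∫₀^v (1_{u ≤ s} − 1_{u ≤ 0}) ds. -/
noncomputable def checkLoss (τ : ℝ) (u : ℝ) : ℝ :=
  u * (τ - if u ≤ 0 then 1 else 0)

open Set

/-!
Writing `ρ_τ(x) = τ x + max (-x) 0`, the linear parts of both sides agree, and the claim reduces to
`∫₀^v 1_{u ≤ s} ds = max (v - u) 0 - max (-u) 0`: the step `s ↦ 1_{u ≤ s}` is the right derivative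
of the continuous function `s ↦ max (s - u) 0` at every point.
-/

theorem checkLoss_eq_mul_add_max (τ x : ℝ) : checkLoss τ x = τ * x + max (-x) 0 := by
  unfold checkLoss
  split_ifs with hx
  · rw [max_eq_left (by linarith)]; ring
  · rw [max_eq_right (by linarith)]; ring

theorem monotone_step (u : ℝ) : Monotone fun s : ℝ => if u ≤ s then (1 : ℝ) else 0 := by
  intro x y hxy
  dsimp only
  split_ifs with hx hy
  · exact le_rfl
  · exact absurd (hx.trans hxy) hy
  · exact zero_le_one
  · exact le_rfl

theorem hasDerivWithinAt_max_sub_Ioi (u x : ℝ) :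
    HasDerivWithinAt (fun s => max (s - u) 0) (if u ≤ x then 1 else 0) (Ioi x) x := by
  split_ifs with hux
  · refine ((hasDerivAt_id x).sub_const u).hasDerivWithinAt.congr (fun s hs => ?_) ?_
    · exact max_eq_left (by linarith [mem_Ioi.mp hs])
    · exact max_eq_left (by linarith)
  · have hxu : x < u := not_le.mp hux
    refine (hasDerivWithinAt_const x (Ioi x) (0 : ℝ)).congr_of_eventuallyEq ?_ ?_
    · filter_upwards [nhdsWithin_le_nhds (Iio_mem_nhds hxu)] with s hs
      exact max_eq_right (by linarith [mem_Iio.mp hs])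
    · exact max_eq_right (by linarith)

theorem integral_step (u a b : ℝ) :
    ∫ s in a..b, (if u ≤ s then (1 : ℝ) else 0) = max (b - u) 0 - max (a - u) 0 :=
  intervalIntegral.integral_eq_sub_of_hasDeriv_right
    (by fun_prop) (fun x _ => hasDerivWithinAt_max_sub_Ioi u x)
    ((monotone_step u).intervalIntegrable)

theorem stmt3_general (τ : ℝ) (u v : ℝ) :
    checkLoss τ (u - v) - checkLoss τ u =
      -v * (τ - if u ≤ 0 then 1 else 0) +
        ∫ s in (0 : ℝ)..v,
          ((if u ≤ s then (1 : ℝ) else 0) - (if u ≤ 0 then (1 : ℝ) else 0)) := by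
  rw [intervalIntegral.integral_sub ((monotone_step u).intervalIntegrable) intervalIntegrable_const,
    integral_step, intervalIntegral.integral_const, smul_eq_mul,
    checkLoss_eq_mul_add_max, checkLoss_eq_mul_add_max, neg_sub, zero_sub]
  ring

/-- Knight's identity for the check loss. -/
theorem stmt3 (τ : ℝ) (hτ : τ ∈ Set.Ioo (0 : ℝ) 1) (u v : ℝ) :
    checkLoss τ (u - v) - checkLoss τ u =
      -v * (τ - if u ≤ 0 then 1 else 0) +
        ∫ s in (0 : ℝ)..v,
          ((if u ≤ s then (1 : ℝ) else 0) - (if u ≤ 0 then (1 : ℝ) else 0)) :=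
  stmt3_general τ u v
end

section
/- Let (X, Y) be random variables, R a Bernoulli response indicator, and suppose the selection model satisfies Pr(R = 1 | X, Y) = 1/(1 + exp(φ(X) + γY)) for a measurable function φ and constant γ, with this probability bounded away from 0 and 1. Then the conditional odds of nonresponse given X satisfy (1 − Pr(R = 1 | X)) / Pr(R = 1 | X) = exp(φ(X)) · E[exp(γY) | X, R = 1]. -/
/-!
Write `p' = P(R = 1 | X, Y)`. The model says `1 - p' = exp (φ X) · exp (γ Y) · p'`. Conditioning on
`X` (tower property) and pulling out `exp (φ X)` gives
`1 - P(R = 1 | X) = exp (φ X) · E[exp (γ Y) · p' | X] = exp (φ X) · E[1_{R = 1} exp (γ Y) | X]`,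
and Bayes' formula `E[1_A f | X] = E_{μ[|A]}[f | X] · P(A | X)` turns the last factor into
`E[exp (γ Y) | X, R = 1] · P(R = 1 | X)`.
-/

open MeasureTheory ProbabilityTheory

lemma Set.indicator_eq_mul_indicator_one {ι M₀ : Type*} [MulZeroOneClass M₀] (s : Set ι)
    (f : ι → M₀) : s.indicator f = f * s.indicator fun _ => 1 := by
  funext i
  simpa using s.indicator_mul_right (i := i) f fun _ => 1

lemma Real.one_sub_one_div_one_add_exp_add (s t : ℝ) :
    1 - 1 / (1 + exp (s + t)) = exp s * (exp t * (1 / (1 + exp (s + t)))) := by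
  rw [← mul_assoc, ← exp_add]
  field_simp
  ring

section

variable {Ω : Type*} {m m' mΩ : MeasurableSpace Ω} {μ : Measure Ω} {A s : Set Ω} {f : Ω → ℝ}

namespace MeasureTheory

lemma condExp_one_sub [IsFiniteMeasure μ] (hm : m ≤ mΩ) (hf : Integrable f μ) :
    μ[fun ω => 1 - f ω | m] =ᵐ[μ] fun ω => 1 - μ[f | m] ω := by
  have h := condExp_sub (integrable_const (1 : ℝ)) hf m
  rwa [condExp_const hm] at h

lemma condExp_indicator_ae_eq_mul_condExp_indicator_one [IsFiniteMeasure μ]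
    (hA : MeasurableSet A) (hf : StronglyMeasurable[m] f) (hfA : Integrable (A.indicator f) μ) :
    μ[A.indicator f | m] =ᵐ[μ] f * μ[A.indicator (fun _ => (1 : ℝ)) | m] := by
  rw [Set.indicator_eq_mul_indicator_one] at hfA ⊢
  exact condExp_mul_of_stronglyMeasurable_left hf hfA ((integrable_const 1).indicator hA)

end MeasureTheory

namespace ProbabilityTheory

lemma integrable_indicator_of_integrable_cond [IsFiniteMeasure μ] (hA : MeasurableSet A)
    (hf : Integrable f μ[|A]) : Integrable (A.indicator f) μ := by
  refine IntegrableOn.integrable_indicator ?_ hA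
  by_cases hμA : μ A = 0
  · simp [IntegrableOn, Measure.restrict_eq_zero.mpr hμA]
  · rwa [cond, integrable_smul_measure (ENNReal.inv_ne_zero.mpr (measure_ne_top μ A))
      (ENNReal.inv_ne_top.mpr hμA)] at hf

lemma setIntegral_indicator_eq_measureReal_mul_setIntegral_cond [IsFiniteMeasure μ]
    (hA : MeasurableSet A) (hs : MeasurableSet s) (f : Ω → ℝ) :
    ∫ ω in s, A.indicator f ω ∂μ = μ.real A * ∫ ω in s, f ω ∂μ[|A] := by
  rw [setIntegral_indicator hA, cond, Measure.restrict_smul, integral_smul_measure, smul_eq_mul,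
    Measure.restrict_restrict hs, ← mul_assoc, ENNReal.toReal_inv]
  by_cases hμA : μ A = 0
  · simp [Measure.restrict_eq_zero.mpr (measure_mono_null Set.inter_subset_right hμA)]
  · rw [measureReal_def, mul_inv_cancel₀ (ENNReal.toReal_ne_zero.mpr ⟨hμA, measure_ne_top μ A⟩),
      one_mul]

lemma condExp_indicator_ae_eq_condExp_cond_mul [IsFiniteMeasure μ] (hm : m ≤ mΩ)
    (hA : MeasurableSet A) (hf : Integrable f μ[|A]) :
    μ[A.indicator f | m] =ᵐ[μ] μ[|A][f | m] * μ[A.indicator (fun _ => (1 : ℝ)) | m] := by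
  have hg : Integrable (A.indicator (μ[|A][f | m])) μ :=
    integrable_indicator_of_integrable_cond hA integrable_condExp
  refine (ae_eq_condExp_of_forall_setIntegral_eq hm
    (integrable_indicator_of_integrable_cond hA hf)
    (fun s _ _ => integrable_condExp.integrableOn) (fun s hs _ => ?_)
    stronglyMeasurable_condExp.aestronglyMeasurable).symm.trans
    (condExp_indicator_ae_eq_mul_condExp_indicator_one hA stronglyMeasurable_condExp hg)
  rw [setIntegral_condExp hm hg hs,
    setIntegral_indicator_eq_measureReal_mul_setIntegral_cond hA (hm s hs),
    setIntegral_indicator_eq_measureReal_mul_setIntegral_cond hA (hm s hs),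
    setIntegral_condExp hm hf hs]

lemma one_sub_condExp_indicator_one_ae_eq [IsFiniteMeasure μ] (hmm' : m ≤ m') (hm' : m' ≤ mΩ)
    (hA : MeasurableSet A) {a b : Ω → ℝ} (ha : StronglyMeasurable[m] a)
    (hb : StronglyMeasurable[m'] b) (hbA : Integrable b μ[|A])
    (hodds : (fun ω => 1 - μ[A.indicator (fun _ => (1 : ℝ)) | m'] ω) =ᵐ[μ]
      fun ω => a ω * (b ω * μ[A.indicator (fun _ => (1 : ℝ)) | m'] ω)) :
    (fun ω => 1 - μ[A.indicator (fun _ => (1 : ℝ)) | m] ω) =ᵐ[μ]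
      fun ω => a ω * (μ[|A][b | m] ω * μ[A.indicator (fun _ => (1 : ℝ)) | m] ω) := by
  set p' := μ[A.indicator (fun _ => (1 : ℝ)) | m']
  have h1A : Integrable (A.indicator fun _ => (1 : ℝ)) μ := (integrable_const 1).indicator hA
  have hbp : μ[A.indicator b | m'] =ᵐ[μ] b * p' :=
    condExp_indicator_ae_eq_mul_condExp_indicator_one hA hb
      (integrable_indicator_of_integrable_cond hA hbA)
  have hbp_int : Integrable (b * p') μ := integrable_condExp.congr hbp
  have habp_int : Integrable (a * (b * p')) μ :=
    ((integrable_const 1).sub integrable_condExp).congr hodds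
  calc (fun ω => 1 - μ[A.indicator (fun _ => (1 : ℝ)) | m] ω)
      =ᵐ[μ] μ[fun ω => 1 - A.indicator (fun _ => (1 : ℝ)) ω | m] :=
        (condExp_one_sub (hmm'.trans hm') h1A).symm
    _ =ᵐ[μ] μ[μ[fun ω => 1 - A.indicator (fun _ => (1 : ℝ)) ω | m'] | m] :=
      (condExp_condExp_of_le hmm' hm').symm
    _ =ᵐ[μ] μ[a * (b * p') | m] := condExp_congr_ae ((condExp_one_sub hm' h1A).trans hodds)
    _ =ᵐ[μ] a * μ[b * p' | m] := condExp_mul_of_stronglyMeasurable_left ha habp_int hbp_int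
    _ =ᵐ[μ] a * μ[A.indicator b | m] :=
      ((condExp_congr_ae hbp.symm).trans (condExp_condExp_of_le hmm' hm')).mul_left
    _ =ᵐ[μ] a * (μ[|A][b | m] * μ[A.indicator (fun _ => (1 : ℝ)) | m]) :=
      (condExp_indicator_ae_eq_condExp_cond_mul (hmm'.trans hm') hA hbA).mul_left

end ProbabilityTheory

end

theorem stmt5_general {Ω : Type*} [m0 : MeasurableSpace Ω] (μ : Measure Ω) [IsProbabilityMeasure μ]
    (X Y R : Ω → ℝ) (hX : Measurable X) (hY : Measurable Y) (hR : Measurable R)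
    (φ : ℝ → ℝ) (hφ : Measurable φ) (γ : ℝ)
    (A : Set Ω) (hA : A = {ω | R ω = 1})
    (mX : MeasurableSpace Ω) (hmX : mX = MeasurableSpace.comap X inferInstance)
    (mXY : MeasurableSpace Ω)
    (hmXY : mXY = MeasurableSpace.comap (fun ω => (X ω, Y ω)) inferInstance)
    (π : Ω → ℝ) (hπ : π = fun ω => 1 / (1 + Real.exp (φ (X ω) + γ * Y ω)))
    -- the selection model: Pr(R = 1 | X, Y) = π(X, Y)
    (hmodel : μ[A.indicator (fun _ => (1 : ℝ)) | mXY] =ᵐ[μ] π)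
    -- Pr(R = 1 | X)
    (pX : Ω → ℝ) (hpX : pX = μ[A.indicator (fun _ => (1 : ℝ)) | mX])
    (hpXpos : ∀ᵐ ω ∂μ, 0 < pX ω)
    (htilt : Integrable (fun ω => Real.exp (γ * Y ω)) (μ[|A])) :
    (fun ω => (1 - pX ω) / pX ω) =ᵐ[μ]
      fun ω => Real.exp (φ (X ω)) *
        ((μ[|A])[fun ω' => Real.exp (γ * Y ω') | mX]) ω := by
  subst hpX
  have hmX_le_mXY : mX ≤ mXY := by
    subst hmX hmXY
    exact Measurable.comap_le (f := X) (measurable_fst.comp (comap_measurable _))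
  have hmXY_le : mXY ≤ m0 := hmXY ▸ (hX.prodMk hY).comap_le
  have hexpφX : StronglyMeasurable[mX] fun ω => Real.exp (φ (X ω)) := by
    subst hmX
    exact (Real.measurable_exp.comp (hφ.comp (comap_measurable X))).stronglyMeasurable
  have hexpY : StronglyMeasurable[mXY] fun ω => Real.exp (γ * Y ω) := by
    subst hmXY
    exact (Real.measurable_exp.comp
      ((measurable_snd.comp (comap_measurable _)).const_mul γ)).stronglyMeasurable
  have hodds : (fun ω => 1 - μ[A.indicator (fun _ => (1 : ℝ)) | mXY] ω) =ᵐ[μ]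
      fun ω => Real.exp (φ (X ω)) *
        (Real.exp (γ * Y ω) * μ[A.indicator (fun _ => (1 : ℝ)) | mXY] ω) :=
    hmodel.mono fun ω hω => by
      simp only [hω, hπ]
      exact Real.one_sub_one_div_one_add_exp_add (φ (X ω)) (γ * Y ω)
  have hkey := one_sub_condExp_indicator_one_ae_eq hmX_le_mXY hmXY_le
    (hA ▸ hR (measurableSet_singleton 1)) hexpφX hexpY htilt hodds
  filter_upwards [hkey, hpXpos] with ω hω hpos
  rw [hω, mul_div_assoc, mul_div_cancel_right₀ _ hpos.ne']

theorem stmt5 {Ω : Type*} [m0 : MeasurableSpace Ω] (μ : Measure Ω) [IsProbabilityMeasure μ]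
    (X Y R : Ω → ℝ) (hX : Measurable X) (hY : Measurable Y) (hR : Measurable R)
    (φ : ℝ → ℝ) (hφ : Measurable φ) (γ : ℝ)
    (A : Set Ω) (hA : A = {ω | R ω = 1})
    (mX : MeasurableSpace Ω) (hmX : mX = MeasurableSpace.comap X inferInstance)
    (mXY : MeasurableSpace Ω)
    (hmXY : mXY = MeasurableSpace.comap (fun ω => (X ω, Y ω)) inferInstance)
    (π : Ω → ℝ) (hπ : π = fun ω => 1 / (1 + Real.exp (φ (X ω) + γ * Y ω)))
    -- the selection model: Pr(R = 1 | X, Y) = π(X, Y)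
    (hmodel : μ[A.indicator (fun _ => (1 : ℝ)) | mXY] =ᵐ[μ] π)
    -- bounded away from 0 and 1
    (hbound : ∀ᵐ ω ∂μ, 0 < π ω ∧ π ω < 1)
    -- Pr(R = 1 | X)
    (pX : Ω → ℝ) (hpX : pX = μ[A.indicator (fun _ => (1 : ℝ)) | mX])
    (hpXpos : ∀ᵐ ω ∂μ, 0 < pX ω)
    (htilt : Integrable (fun ω => Real.exp (γ * Y ω)) (μ[|A])) :
    (fun ω => (1 - pX ω) / pX ω) =ᵐ[μ]
      fun ω => Real.exp (φ (X ω)) *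
        ((μ[|A])[fun ω' => Real.exp (γ * Y ω') | mX]) ω :=
  stmt5_general (m0 := m0) μ X Y R hX hY hR φ hφ γ A hA mX hmX mXY hmXY π hπ hmodel pX hpX hpXpos
    htilt
end

section
/- Under the exponential tilting selection model Pr(R = 1 | X, Y) = 1/(1 + exp(φ(X) + γY)) with 0 < Pr(R=1|X,Y) < 1 a.s., the conditional density of Y given X and R = 0 equals the γ-exponentially-tilted conditional density given R = 1: f(y | X, R=0) = f(y | X, R=1) · exp(γy) / E[exp(γY) | X, R=1]. -/
/-!
Bayes' rule gives `f₀ ∝ f · (1 - π)` and `f₁ ∝ f · π`, and under the logistic model the odds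
`(1 - π y) / π y = exp (φ x) · exp (γ y)` factor into a constant times the tilt `exp (γ y)`.
Hence `f₀ ∝ f₁ · exp (γ ·)`, and the normalising constant is `∫ exp (γ z) f₁ z dz`.
-/

open MeasureTheory

lemma one_sub_inv_one_add_exp (a : ℝ) :
    1 - 1 / (1 + Real.exp a) = Real.exp a * (1 / (1 + Real.exp a)) := by
  have : 1 + Real.exp a ≠ 0 := by positivity
  field_simp
  ring

section Tilting

variable {α : Type*} [MeasurableSpace α] {μ : Measure α} {f π w : α → ℝ} {c p₁ p₀ : ℝ}

lemma integral_mul_div_eq_of_odds (hodds : ∀ y, 1 - π y = c * w y * π y) (hc : c ≠ 0)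
    (hp₀ : p₀ = ∫ y, f y * (1 - π y) ∂μ) :
    ∫ z, w z * (f z * π z / p₁) ∂μ = p₀ / (c * p₁) := by
  have hpoint : (fun z => w z * (f z * π z / p₁)) = fun z => f z * (1 - π z) / (c * p₁) := by
    funext z
    rw [hodds z]
    field_simp
  rw [hpoint, integral_div, hp₀]

lemma div_eq_mul_div_integral_of_odds (hodds : ∀ y, 1 - π y = c * w y * π y)
    (hc : c ≠ 0) (hp₁ : p₁ ≠ 0) (hp₀ : p₀ = ∫ y, f y * (1 - π y) ∂μ) (y : α) :
    f y * (1 - π y) / p₀ = f y * π y / p₁ * w y / ∫ z, w z * (f z * π z / p₁) ∂μ := by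
  rw [integral_mul_div_eq_of_odds hodds hc hp₀, hodds y]
  rcases eq_or_ne p₀ 0 with rfl | hp₀
  · simp -- both sides are junk `_ / 0 = 0`
  · field_simp

end Tilting

theorem stmt6_general (x : ℝ) (φ : ℝ → ℝ) (γ : ℝ)
    (f : ℝ → ℝ)  -- conditional density of Y given X = x
    (π : ℝ → ℝ) (hπ : π = fun y => 1 / (1 + Real.exp (φ x + γ * y)))
    (p1 p0 : ℝ) (hp0 : p0 = ∫ y, f y * (1 - π y))
    (hp1pos : 0 < p1)
    (f1 f0 : ℝ → ℝ)  -- conditional densities of Y given X = x and R = 1, R = 0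
    (hf1d : f1 = fun y => f y * π y / p1)
    (hf0d : f0 = fun y => f y * (1 - π y) / p0) :
    ∀ y, f0 y = f1 y * Real.exp (γ * y) / (∫ z, Real.exp (γ * z) * f1 z) := by
  have hodds : ∀ y, 1 - π y = Real.exp (φ x) * Real.exp (γ * y) * π y := fun y => by
    rw [hπ, ← Real.exp_add]
    exact one_sub_inv_one_add_exp _
  subst hf0d hf1d
  exact div_eq_mul_div_integral_of_odds hodds (Real.exp_ne_zero _) hp1pos.ne' hp0

/-- Exponential-tilting identity for the conditional density of nonrespondents,
stated conditionally on `X = x`. -/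
theorem stmt6 (x : ℝ) (φ : ℝ → ℝ) (γ : ℝ)
    (f : ℝ → ℝ)  -- conditional density of Y given X = x
    (hf0 : ∀ y, 0 ≤ f y) (hfint : Integrable f) (hf1 : (∫ y, f y) = 1)
    (π : ℝ → ℝ) (hπ : π = fun y => 1 / (1 + Real.exp (φ x + γ * y)))
    (hπbound : ∀ y, 0 < π y ∧ π y < 1)
    (p1 p0 : ℝ) (hp1 : p1 = ∫ y, f y * π y) (hp0 : p0 = ∫ y, f y * (1 - π y))
    (hp1pos : 0 < p1) (hp0pos : 0 < p0)
    (f1 f0 : ℝ → ℝ)  -- conditional densities of Y given X = x and R = 1, R = 0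
    (hf1d : f1 = fun y => f y * π y / p1)
    (hf0d : f0 = fun y => f y * (1 - π y) / p0)
    (htilt : Integrable (fun z => Real.exp (γ * z) * f1 z)) :
    ∀ y, f0 y = f1 y * Real.exp (γ * y) / (∫ z, Real.exp (γ * z) * f1 z) :=
  stmt6_general x φ γ f π hπ p1 p0 hp0 hp1pos f1 f0 hf1d hf0d
end

section
/- Let g be a measurable function with E|g(X,Y)| < ∞ and suppose Pr(R=1 | X, Y) = 1/(1 + exp(φ(X) + γY)) with 0 < Pr < 1 a.s. Then E[g(X,Y)] = E[ R·g(X,Y) + (1−R)·M(X) ], where M(X) = E[exp(γY) g(X,Y) | X, R=1] / E[exp(γY) | X, R=1]. -/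
/-!
Let `I` be the indicator of `R = 1` and `η = φ(X) + γY`. Under the model `E[I | X, Y] = π`, the
odds `(1 - π) / π` are `exp η`, so the tower property over `σ(X, Y)` turns `E[(1 - I) Z]` into
`E[I exp(η) Z]` for every `σ(X, Y)`-measurable `Z`; the integrability of `I exp(η) Z` comes
from the same identity for lower integrals of nonnegative functions. Applied to
`Z = g` and `Z = M` this reduces the claim to `E[exp(φ(X)) exp(γY) g] = E[exp(φ(X)) exp(γY) M]`
under the respondent distribution, where both sides equal `E[exp(φ(X)) E[exp(γY) g | X]]`,
by the definition of `M` as a ratio of conditional expectations given `X`.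
-/

open MeasureTheory ProbabilityTheory

section CondExp

variable {Ω : Type*} {m m0 : MeasurableSpace Ω} {μ : Measure Ω}

theorem lintegral_ofReal_condExp_mul (hm : m ≤ m0) [SigmaFinite (μ.trim hm)] {h : Ω → ℝ}
    (hh : Integrable h μ) (h0 : 0 ≤ᵐ[μ] h) {F : Ω → ENNReal} (hF : Measurable[m] F) :
    ∫⁻ ω, ENNReal.ofReal (μ[h | m] ω) * F ω ∂μ = ∫⁻ ω, ENNReal.ofReal (h ω) * F ω ∂μ := by
  have hc : Measurable[m] fun ω => ENNReal.ofReal (μ[h | m] ω) :=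
    stronglyMeasurable_condExp.measurable.ennreal_ofReal
  have hdens : (μ.withDensity fun ω => ENNReal.ofReal (h ω)).trim hm
      = (μ.trim hm).withDensity fun ω => ENNReal.ofReal (μ[h | m] ω) := by
    refine @Measure.ext _ m _ _ fun s hs => ?_
    rw [trim_measurableSet_eq hm hs, withDensity_apply _ (hm s hs), withDensity_apply _ hs,
      setLIntegral_trim hm hc hs,
      ← ofReal_integral_eq_lintegral_ofReal hh.integrableOn (ae_restrict_of_ae h0),
      ← ofReal_integral_eq_lintegral_ofReal integrable_condExp.integrableOn
        (ae_restrict_of_ae (condExp_nonneg h0)),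
      setIntegral_condExp hm hh hs]
  calc ∫⁻ ω, ENNReal.ofReal (μ[h | m] ω) * F ω ∂μ
      = ∫⁻ ω, ENNReal.ofReal (μ[h | m] ω) * F ω ∂μ.trim hm :=
        (lintegral_trim hm (hc.mul hF)).symm
    _ = ∫⁻ ω, F ω ∂(μ.trim hm).withDensity fun ω => ENNReal.ofReal (μ[h | m] ω) :=
        (lintegral_withDensity_eq_lintegral_mul _ hc hF).symm
    _ = ∫⁻ ω, F ω ∂μ.withDensity fun ω => ENNReal.ofReal (h ω) := by
        rw [← hdens, lintegral_trim hm hF]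
    _ = ∫⁻ ω, ENNReal.ofReal (h ω) * F ω ∂μ :=
        lintegral_withDensity_eq_lintegral_mul₀ hh.1.aemeasurable.ennreal_ofReal
          (hF.mono hm le_rfl).aemeasurable

theorem integrable_mul_of_integrable_mul_condExp (hm : m ≤ m0) [SigmaFinite (μ.trim hm)]
    {f h : Ω → ℝ} (hf : StronglyMeasurable[m] f) (hh : Integrable h μ) (h0 : 0 ≤ᵐ[μ] h)
    (hfh : Integrable (f * μ[h | m]) μ) : Integrable (f * h) μ := by
  refine ⟨(hf.mono hm).aestronglyMeasurable.mul hh.1, ?_⟩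
  have key := lintegral_ofReal_condExp_mul hm hh h0 (F := fun ω => ‖f ω‖ₑ) hf.enorm
  calc ∫⁻ ω, ‖(f * h) ω‖ₑ ∂μ = ∫⁻ ω, ENNReal.ofReal (h ω) * ‖f ω‖ₑ ∂μ := by
        refine lintegral_congr_ae (h0.mono fun ω hω => ?_)
        simp only [Pi.mul_apply, enorm_mul, Real.enorm_of_nonneg hω, mul_comm]
    _ = ∫⁻ ω, ‖(f * μ[h | m]) ω‖ₑ ∂μ := by
        rw [← key]
        refine lintegral_congr_ae ((condExp_nonneg (m := m) h0).mono fun ω hω => ?_)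
        simp only [Pi.mul_apply, enorm_mul, Real.enorm_of_nonneg hω, mul_comm]
    _ < ⊤ := hfh.2

theorem integral_mul_condExp (hm : m ≤ m0) [SigmaFinite (μ.trim hm)] {f h : Ω → ℝ}
    (hf : StronglyMeasurable[m] f) (hfh : Integrable (f * h) μ) (hh : Integrable h μ) :
    ∫ ω, f ω * μ[h | m] ω ∂μ = ∫ ω, f ω * h ω ∂μ :=
  (integral_congr_ae (condExp_mul_of_stronglyMeasurable_left hf hfh hh)).symm.trans
    (integral_condExp hm)

theorem integral_mul_mul_eq_integral_mul_mul_condExp_div (hm : m ≤ m0)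
    [SigmaFinite (μ.trim hm)] {q w G : Ω → ℝ} (hq : StronglyMeasurable[m] q)
    (hw : Integrable w μ) (hwG : Integrable (fun ω => w ω * G ω) μ)
    (hden : ∀ᵐ ω ∂μ, μ[w | m] ω ≠ 0) (hqwG : Integrable (fun ω => q ω * w ω * G ω) μ)
    (hqwM : Integrable
      (fun ω => q ω * w ω * (μ[fun ω => w ω * G ω | m] ω / μ[w | m] ω)) μ) :
    ∫ ω, q ω * w ω * G ω ∂μ
      = ∫ ω, q ω * w ω * (μ[fun ω => w ω * G ω | m] ω / μ[w | m] ω) ∂μ := by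
  set M := μ[fun ω => w ω * G ω | m] / μ[w | m]
  have hM : StronglyMeasurable[m] M := (stronglyMeasurable_condExp.measurable.div
    stronglyMeasurable_condExp.measurable).stronglyMeasurable
  calc ∫ ω, q ω * w ω * G ω ∂μ = ∫ ω, q ω * (w ω * G ω) ∂μ := by simp only [mul_assoc]
    _ = ∫ ω, q ω * μ[fun ω => w ω * G ω | m] ω ∂μ :=
        (integral_mul_condExp hm hq (hqwG.congr (ae_of_all _ fun _ => mul_assoc _ _ _)) hwG).symm
    _ = ∫ ω, (q * M) ω * μ[w | m] ω ∂μ :=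
        integral_congr_ae (hden.mono fun ω hω => by
          simp only [M, Pi.mul_apply, Pi.div_apply, mul_assoc, div_mul_cancel₀ _ hω])
    _ = ∫ ω, (q * M) ω * w ω ∂μ :=
        integral_mul_condExp hm (hq.mul hM)
          (hqwM.congr (ae_of_all _ fun _ => mul_right_comm _ _ _)) hw
    _ = ∫ ω, q ω * w ω * M ω ∂μ := by simp only [Pi.mul_apply, mul_right_comm]

theorem integral_one_sub_indicator_mul_eq_setIntegral_exp_mul (hm : m ≤ m0) [IsFiniteMeasure μ]
    {A : Set Ω} (hA : MeasurableSet A) {η Z : Ω → ℝ} (hη : StronglyMeasurable[m] η)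
    (hZ : StronglyMeasurable[m] Z)
    (hmodel : μ[A.indicator (fun _ => (1 : ℝ)) | m] =ᵐ[μ] fun ω => 1 / (1 + Real.exp (η ω)))
    (hZint : Integrable (fun ω => (1 - A.indicator (fun _ => (1 : ℝ)) ω) * Z ω) μ) :
    IntegrableOn (fun ω => Real.exp (η ω) * Z ω) A μ ∧
      ∫ ω, (1 - A.indicator (fun _ => (1 : ℝ)) ω) * Z ω ∂μ
        = ∫ ω in A, Real.exp (η ω) * Z ω ∂μ := by
  set I : Ω → ℝ := A.indicator fun _ => 1
  set F : Ω → ℝ := fun ω => Real.exp (η ω) * Z ω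
  have hI : Integrable I μ := (integrable_const 1).indicator hA
  have hJ : Integrable (fun ω => 1 - I ω) μ := (integrable_const 1).sub hI
  have hF : StronglyMeasurable[m] F := (Real.continuous_exp.comp_stronglyMeasurable hη).mul hZ
  have hZJ : Integrable (Z * fun ω => 1 - I ω) μ :=
    hZint.congr (ae_of_all _ fun _ => mul_comm _ _)
  have hFI_eq : ∀ ω, F ω * I ω = A.indicator F ω := fun ω => by
    simp only [I, ← Set.indicator_mul_right, mul_one]
  have hJ_cond : μ[fun ω => 1 - I ω | m] =ᵐ[μ] fun ω => 1 - 1 / (1 + Real.exp (η ω)) :=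
    (condExp_sub (integrable_const 1) hI m).trans <| hmodel.mono fun ω hω => by
      rw [Pi.sub_apply, condExp_const hm, hω]
  -- the odds `(1 - π) / π` of the logistic model are `exp η`
  have hodds : Z * μ[fun ω => 1 - I ω | m] =ᵐ[μ] F * μ[I | m] := by
    filter_upwards [hJ_cond, hmodel] with ω hJω hIω
    have : (0 : ℝ) < 1 + Real.exp (η ω) := by positivity
    simp only [Pi.mul_apply, hJω, hIω, F]
    field_simp
    ring
  have hFI : Integrable (F * I) μ := by
    refine integrable_mul_of_integrable_mul_condExp hm hF hI
      (ae_of_all _ (Set.indicator_nonneg fun _ _ => zero_le_one)) ?_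
    exact integrable_condExp.congr ((condExp_mul_of_stronglyMeasurable_left hZ hZJ hJ).trans hodds)
  refine ⟨(integrable_indicator_iff hA).mp (hFI.congr (ae_of_all _ hFI_eq)), ?_⟩
  calc ∫ ω, (1 - I ω) * Z ω ∂μ = ∫ ω, Z ω * (1 - I ω) ∂μ := by simp only [mul_comm]
    _ = ∫ ω, Z ω * μ[fun ω => 1 - I ω | m] ω ∂μ := (integral_mul_condExp hm hZ hZJ hJ).symm
    _ = ∫ ω, F ω * μ[I | m] ω ∂μ := integral_congr_ae hodds
    _ = ∫ ω, A.indicator F ω ∂μ := by simp only [integral_mul_condExp hm hF hFI hI, hFI_eq]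
    _ = ∫ ω in A, F ω ∂μ := integral_indicator hA

end CondExp

section Integral

variable {Ω : Type*} {m0 : MeasurableSpace Ω} {μ : Measure Ω}

theorem MeasureTheory.IntegrableOn.integrable_cond {s : Set Ω} {f : Ω → ℝ}
    (hf : IntegrableOn f s μ) : Integrable f μ[|s] := by
  by_cases hs : μ s = 0
  · rw [cond_eq_zero_of_meas_eq_zero hs]
    exact integrable_zero_measure
  · exact hf.smul_measure (ENNReal.inv_ne_top.mpr hs)

theorem setIntegral_eq_measureReal_mul_integral_cond [IsFiniteMeasure μ] {s : Set Ω}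
    {f : Ω → ℝ} : ∫ ω in s, f ω ∂μ = μ.real s * ∫ ω, f ω ∂μ[|s] := by
  rw [ProbabilityTheory.cond, integral_smul_measure, ENNReal.toReal_inv, smul_eq_mul,
    ← mul_assoc]
  by_cases hs : μ.real s = 0
  · rw [Measure.restrict_eq_zero.mpr ((measureReal_eq_zero_iff).mp hs), integral_zero_measure,
      mul_zero]
  · rw [measureReal_def] at hs
    rw [measureReal_def, mul_inv_cancel₀ hs, one_mul]

theorem integral_eq_integral_mul_add_one_sub_mul {w f h : Ω → ℝ}
    (hwf : Integrable (fun ω => w ω * f ω) μ) (hf : Integrable (fun ω => (1 - w ω) * f ω) μ)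
    (hh : Integrable (fun ω => (1 - w ω) * h ω) μ)
    (heq : ∫ ω, (1 - w ω) * f ω ∂μ = ∫ ω, (1 - w ω) * h ω ∂μ) :
    ∫ ω, f ω ∂μ = ∫ ω, (w ω * f ω + (1 - w ω) * h ω) ∂μ :=
  calc ∫ ω, f ω ∂μ = ∫ ω, (w ω * f ω + (1 - w ω) * f ω) ∂μ := by congr with ω; ring
    _ = ∫ ω, w ω * f ω ∂μ + ∫ ω, (1 - w ω) * h ω ∂μ := by rw [integral_add hwf hf, heq]
    _ = ∫ ω, (w ω * f ω + (1 - w ω) * h ω) ∂μ := (integral_add hwf hh).symm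

end Integral

theorem stmt7_general {Ω : Type*} [m0 : MeasurableSpace Ω] (μ : Measure Ω) [IsProbabilityMeasure μ]
    (X Y R : Ω → ℝ) (hX : Measurable X) (hY : Measurable Y) (hR : Measurable R)
    (φ : ℝ → ℝ) (hφ : Measurable φ) (γ : ℝ)
    (g : ℝ × ℝ → ℝ) (hg : Measurable g)
    (hgint : Integrable (fun ω => g (X ω, Y ω)) μ)
    (A : Set Ω) (hA : A = {ω | R ω = 1})
    (mX : MeasurableSpace Ω) (hmX : mX = MeasurableSpace.comap X inferInstance)
    (mXY : MeasurableSpace Ω)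
    (hmXY : mXY = MeasurableSpace.comap (fun ω => (X ω, Y ω)) inferInstance)
    (π : Ω → ℝ) (hπ : π = fun ω => 1 / (1 + Real.exp (φ (X ω) + γ * Y ω)))
    (hmodel : μ[A.indicator (fun _ => (1 : ℝ)) | mXY] =ᵐ[μ] π)
    (htilt1 : Integrable (fun ω => Real.exp (γ * Y ω)) (μ[|A]))
    (htilt2 : Integrable (fun ω => Real.exp (γ * Y ω) * g (X ω, Y ω)) (μ[|A]))
    (M : Ω → ℝ)
    (hM : M = fun ω =>
      ((μ[|A])[fun ω' => Real.exp (γ * Y ω') * g (X ω', Y ω') | mX]) ω /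
        ((μ[|A])[fun ω' => Real.exp (γ * Y ω') | mX]) ω)
    (hden : ∀ᵐ ω ∂μ, ((μ[|A])[fun ω' => Real.exp (γ * Y ω') | mX]) ω ≠ 0)
    (hRHSint : Integrable (fun ω =>
      A.indicator (fun _ => (1 : ℝ)) ω * g (X ω, Y ω)
        + (1 - A.indicator (fun _ => (1 : ℝ)) ω) * M ω) μ) :
    (∫ ω, g (X ω, Y ω) ∂μ) =
      ∫ ω, (A.indicator (fun _ => (1 : ℝ)) ω * g (X ω, Y ω)
        + (1 - A.indicator (fun _ => (1 : ℝ)) ω) * M ω) ∂μ := by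
  subst hπ
  -- `mX` and `mXY` are local instances; make the ambient σ-algebra the default again
  let _ : MeasurableSpace Ω := m0
  set I : Ω → ℝ := A.indicator fun _ => 1
  have hAm : MeasurableSet A := hA ▸ hR (measurableSet_singleton 1)
  have hmX_le : mX ≤ m0 := hmX ▸ hX.comap_le
  have hmXY_le : mXY ≤ m0 := hmXY ▸ (hX.prodMk hY).comap_le
  have hXY : Measurable[mXY] fun ω => (X ω, Y ω) := hmXY ▸ comap_measurable _
  have hXmX : Measurable[mX] X := hmX ▸ comap_measurable X
  have hη : StronglyMeasurable[mXY] fun ω => φ (X ω) + γ * Y ω :=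
    (((hφ.comp measurable_fst).add (measurable_const.mul measurable_snd)).comp
      hXY).stronglyMeasurable
  have hM_meas : StronglyMeasurable[mXY] M :=
    hM ▸ ((stronglyMeasurable_condExp.measurable.div stronglyMeasurable_condExp.measurable).mono
      (hmX ▸ (measurable_fst.comp hXY).comap_le) le_rfl).stronglyMeasurable
  have hIg : Integrable (fun ω => I ω * g (X ω, Y ω)) μ :=
    (hgint.indicator hAm).congr (ae_of_all _ fun ω => by by_cases hω : ω ∈ A <;> simp [I, hω])
  have hJg : Integrable (fun ω => (1 - I ω) * g (X ω, Y ω)) μ :=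
    (hgint.sub hIg).congr (ae_of_all _ fun ω => by simp only [Pi.sub_apply]; ring)
  have hJM : Integrable (fun ω => (1 - I ω) * M ω) μ :=
    (hRHSint.sub hIg).congr (ae_of_all _ fun ω => by simp only [Pi.sub_apply]; ring)
  obtain ⟨hgA, hg_eq⟩ := integral_one_sub_indicator_mul_eq_setIntegral_exp_mul
    hmXY_le hAm hη (Z := fun ω => g (X ω, Y ω))
    (hg.comp hXY).stronglyMeasurable hmodel hJg
  obtain ⟨hMA, hM_eq⟩ := integral_one_sub_indicator_mul_eq_setIntegral_exp_mul
    hmXY_le hAm hη hM_meas hmodel hJM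
  subst hM
  simp only [Real.exp_add] at hgA hg_eq hMA hM_eq
  refine integral_eq_integral_mul_add_one_sub_mul hIg hJg hJM ?_
  rw [hg_eq, hM_eq, setIntegral_eq_measureReal_mul_integral_cond,
    setIntegral_eq_measureReal_mul_integral_cond,
    integral_mul_mul_eq_integral_mul_mul_condExp_div hmX_le (q := fun ω => Real.exp (φ (X ω)))
      (Real.measurable_exp.comp (hφ.comp hXmX)).stronglyMeasurable htilt1 htilt2
      (cond_absolutelyContinuous.ae_le hden) hgA.integrable_cond hMA.integrable_cond]

theorem stmt7 {Ω : Type*} [m0 : MeasurableSpace Ω] (μ : Measure Ω) [IsProbabilityMeasure μ]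
    (X Y R : Ω → ℝ) (hX : Measurable X) (hY : Measurable Y) (hR : Measurable R)
    (φ : ℝ → ℝ) (hφ : Measurable φ) (γ : ℝ)
    (g : ℝ × ℝ → ℝ) (hg : Measurable g)
    (hgint : Integrable (fun ω => g (X ω, Y ω)) μ)
    (A : Set Ω) (hA : A = {ω | R ω = 1})
    (mX : MeasurableSpace Ω) (hmX : mX = MeasurableSpace.comap X inferInstance)
    (mXY : MeasurableSpace Ω)
    (hmXY : mXY = MeasurableSpace.comap (fun ω => (X ω, Y ω)) inferInstance)
    (π : Ω → ℝ) (hπ : π = fun ω => 1 / (1 + Real.exp (φ (X ω) + γ * Y ω)))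
    (hmodel : μ[A.indicator (fun _ => (1 : ℝ)) | mXY] =ᵐ[μ] π)
    (hbound : ∀ᵐ ω ∂μ, 0 < π ω ∧ π ω < 1)
    (htilt1 : Integrable (fun ω => Real.exp (γ * Y ω)) (μ[|A]))
    (htilt2 : Integrable (fun ω => Real.exp (γ * Y ω) * g (X ω, Y ω)) (μ[|A]))
    (M : Ω → ℝ)
    (hM : M = fun ω =>
      ((μ[|A])[fun ω' => Real.exp (γ * Y ω') * g (X ω', Y ω') | mX]) ω /
        ((μ[|A])[fun ω' => Real.exp (γ * Y ω') | mX]) ω)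
    (hden : ∀ᵐ ω ∂μ, ((μ[|A])[fun ω' => Real.exp (γ * Y ω') | mX]) ω ≠ 0)
    (hRHSint : Integrable (fun ω =>
      A.indicator (fun _ => (1 : ℝ)) ω * g (X ω, Y ω)
        + (1 - A.indicator (fun _ => (1 : ℝ)) ω) * M ω) μ) :
    (∫ ω, g (X ω, Y ω) ∂μ) =
      ∫ ω, (A.indicator (fun _ => (1 : ℝ)) ω * g (X ω, Y ω)
        + (1 - A.indicator (fun _ => (1 : ℝ)) ω) * M ω) ∂μ :=
  stmt7_general (m0 := m0) μ X Y R hX hY hR φ hφ γ g hg hgint A hA mX hmX mXY hmXY π hπ hmodel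
    htilt1 htilt2 M hM hden hRHSint
end
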